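/- arXiv:2402.06103 — 2 statements merged into one kernel-verified Lean document; each statement's English description precedes it below -/
import Mathlib

section
/- Let m ≥ 1 and t_0 < t_1 < ... < t_m be real numbers, and let g be a function defined at these points such that (-1)^{m-i}(g(t_i) - g(t_{i-1})) ≥ 0 for all 1 ≤ i ≤ m. Then (t_m - t_0)^m · |[t_0, t_1, ..., t_m; g]| ≥ max_{0≤i≤m} g(t_i) − min_{0≤i≤m} g(t_i). -/
/-- Divided difference of order `m` of `g` at knots `t 0, …, t m`. -/
noncomputable def divDiff (m : ℕ) (t : ℕ → ℝ) (g : ℝ → ℝ) : ℝ :=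
  ∑ i ∈ Finset.range (m + 1),
    g (t i) / ∏ j ∈ (Finset.range (m + 1)).erase i, (t i - t j)

/-!
By the recurrence `(t_{n+1} - t_0) [t_0, …, t_{n+1}] = [t_1, …, t_{n+1}] - [t_0, …, t_n]`, the
scaled divided difference splits into contributions of two overlapping windows of `n + 1` knots.
The sign pattern of the increments on the final window is that of `g` and on the initial window
that of `-g`, so by induction the first divided difference on the right is nonnegative, the second
nonpositive, and each bounds the oscillation of `g` on its window. Since the windows overlap, the
oscillation on all knots is at most the sum of the two.
-/

open Finset

section DivDiffOn

variable {ι K : Type*} [DecidableEq ι] [Field K]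

noncomputable def divDiffOn (s : Finset ι) (t y : ι → K) : K :=
  ∑ i ∈ s, y i / ∏ j ∈ s.erase i, (t i - t j)

@[simp]
theorem divDiffOn_singleton (a : ι) (t y : ι → K) : divDiffOn {a} t y = y a := by
  simp [divDiffOn]

theorem divDiffOn_neg (s : Finset ι) (t y : ι → K) :
    divDiffOn s t (fun i => -y i) = -divDiffOn s t y := by
  simp [divDiffOn, neg_div]

theorem divDiffOn_map {κ : Type*} [DecidableEq κ] (s : Finset κ) (e : κ ↪ ι) (t y : ι → K) :
    divDiffOn (s.map e) t y = divDiffOn s (t ∘ e) (y ∘ e) := by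
  simp [divDiffOn, ← map_erase]

theorem divDiffOn_erase {s : Finset ι} {t : ι → K} (ht : Set.InjOn t s) {k : ι} (hk : k ∈ s)
    (y : ι → K) :
    divDiffOn (s.erase k) t y = divDiffOn s t (fun i => (t i - t k) * y i) := by
  rw [divDiffOn, divDiffOn, ← sum_erase (s := s) (a := k) (by simp)]
  refine sum_congr rfl fun i hi => ?_
  have htik : t i - t k ≠ 0 :=
    sub_ne_zero.2 fun h => (ne_of_mem_erase hi) (ht (mem_of_mem_erase hi) hk h)
  rw [← mul_prod_erase _ _ (mem_erase.2 ⟨(ne_of_mem_erase hi).symm, hk⟩), erase_right_comm,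
    mul_div_mul_left _ _ htik]

theorem sub_mul_divDiffOn {s : Finset ι} {t : ι → K} (ht : Set.InjOn t s) {a b : ι}
    (ha : a ∈ s) (hb : b ∈ s) (y : ι → K) :
    (t b - t a) * divDiffOn s t y = divDiffOn (s.erase a) t y - divDiffOn (s.erase b) t y := by
  rw [divDiffOn_erase ht ha, divDiffOn_erase ht hb, divDiffOn, divDiffOn, divDiffOn, mul_sum,
    ← sum_sub_distrib]
  refine sum_congr rfl fun i _ => ?_
  ring

end DivDiffOn

theorem sub_mul_divDiffOn_range {K : Type*} [Field K] (n : ℕ) {t : ℕ → K}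
    (ht : Set.InjOn t (Set.Iic (n + 1))) (y : ℕ → K) :
    (t (n + 1) - t 0) * divDiffOn (range (n + 2)) t y =
      divDiffOn (range (n + 1)) (fun i => t (i + 1)) (fun i => y (i + 1)) -
        divDiffOn (range (n + 1)) t y := by
  have ht' : Set.InjOn t (range (n + 2)) := ht.mono fun i hi => by simp at hi ⊢; omega
  have h0 : (range (n + 2)).erase 0 = (range (n + 1)).map (addRightEmbedding 1) := by
    rw [range_add_one', erase_insert (by simp)]
    rfl
  have hlast : (range (n + 2)).erase (n + 1) = range (n + 1) := by
    ext i; simp; omega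
  rw [sub_mul_divDiffOn ht' (by simp) (by simp), h0, hlast, divDiffOn_map]
  rfl

theorem sub_le_add_of_mem_union {ι α : Type*} [AddCommGroup α] [PartialOrder α]
    [IsOrderedAddMonoid α] {S U : Set ι} {y : ι → α} {a b : α} {k : ι} (hkS : k ∈ S)
    (hkU : k ∈ U) (hS : ∀ i ∈ S, ∀ j ∈ S, y i - y j ≤ a) (hU : ∀ i ∈ U, ∀ j ∈ U, y i - y j ≤ b)
    {i j : ι} (hi : i ∈ S ∪ U) (hj : j ∈ S ∪ U) : y i - y j ≤ a + b := by
  have ha : 0 ≤ a := by simpa using hS k hkS k hkS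
  have hb : 0 ≤ b := by simpa using hU k hkU k hkU
  have hsplit : y i - y j = (y i - y k) + (y k - y j) := by abel
  rcases hi with hi | hi <;> rcases hj with hj | hj
  · exact le_add_of_le_of_nonneg (hS i hi j hj) hb
  · exact hsplit ▸ add_le_add (hS i hi k hkS) (hU k hkU j hj)
  · exact hsplit ▸ add_comm a b ▸ add_le_add (hU i hi k hkU) (hS k hkS j hj)
  · exact le_add_of_nonneg_of_le ha (hU i hi j hj)

section AlternatingIncrements

variable {K : Type*} [CommRing K] [LE K]

def HasAlternatingIncrements (n : ℕ) (y : ℕ → K) : Prop :=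
  ∀ i ≤ n, 0 ≤ (-1) ^ (n - i) * (y (i + 1) - y i)

theorem HasAlternatingIncrements.tail {n : ℕ} {y : ℕ → K}
    (hy : HasAlternatingIncrements (n + 1) y) :
    HasAlternatingIncrements n (fun i => y (i + 1)) := fun i hi => by
  simpa using hy (i + 1) (by omega)

theorem HasAlternatingIncrements.neg_init {n : ℕ} {y : ℕ → K}
    (hy : HasAlternatingIncrements (n + 1) y) : HasAlternatingIncrements n (fun i => -y i) :=
  fun i hi => (hy i (by omega)).trans_eq <| by
    rw [show n + 1 - i = n - i + 1 by omega, pow_succ]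
    ring

end AlternatingIncrements

theorem forall_sub_le_mul_of_le {ι K : Type*} [Field K] [LinearOrder K] [IsStrictOrderedRing K]
    {S : Set ι} {y : ι → K} {c c' d : K} (hS : S.Nonempty)
    (h : ∀ i ∈ S, ∀ j ∈ S, y i - y j ≤ c' * d) (hc' : 0 < c') (hc : c' ≤ c) :
    ∀ i ∈ S, ∀ j ∈ S, y i - y j ≤ c * d := by
  obtain ⟨k, hk⟩ := hS
  have hd : 0 ≤ d := nonneg_of_mul_nonneg_right (by simpa using h k hk k hk) hc'
  exact fun i hi j hj => (h i hi j hj).trans (mul_le_mul_of_nonneg_right hc hd)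

theorem sub_le_pow_mul_add_of_windows {K : Type*} [Field K] [LinearOrder K]
    [IsStrictOrderedRing K] (n : ℕ) {t y : ℕ → K} (ht : StrictMonoOn t (Set.Iic (n + 2)))
    {a b : K}
    (hfinal : ∀ i ≤ n + 1, ∀ j ≤ n + 1, y (i + 1) - y (j + 1) ≤ (t (n + 2) - t 1) ^ (n + 1) * a)
    (hinit : ∀ i ≤ n + 1, ∀ j ≤ n + 1, y i - y j ≤ (t (n + 1) - t 0) ^ (n + 1) * b)
    {i j : ℕ} (hi : i ≤ n + 2) (hj : j ≤ n + 2) :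
    y i - y j ≤ (t (n + 2) - t 0) ^ (n + 1) * a + (t (n + 2) - t 0) ^ (n + 1) * b := by
  have hIic {k l : ℕ} (h : k ≤ l) : k ∈ Set.Iic l := h
  have ht01 : t 0 < t 1 := ht (hIic (by omega)) (hIic (by omega)) zero_lt_one
  have ht1 : t 1 < t (n + 2) := ht (hIic (by omega)) (hIic le_rfl) (by omega)
  have ht0n : t 0 < t (n + 1) := ht (hIic (by omega)) (hIic (by omega)) (by omega)
  have htn : t (n + 1) < t (n + 2) := ht (hIic (by omega)) (hIic le_rfl) (by omega)
  have hfinal' : ∀ i ∈ Set.Icc 1 (n + 2), ∀ j ∈ Set.Icc 1 (n + 2),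
      y i - y j ≤ (t (n + 2) - t 1) ^ (n + 1) * a := by
    rintro (_ | i) ⟨_, hi⟩ (_ | j) ⟨_, hj⟩
    all_goals first | omega | exact hfinal i (by omega) j (by omega)
  refine sub_le_add_of_mem_union (k := 1) (S := Set.Icc 1 (n + 2)) (U := Set.Iic (n + 1))
    ⟨le_rfl, by omega⟩ (hIic (by omega)) ?_ ?_ (by simp; omega) (by simp; omega)
  · exact forall_sub_le_mul_of_le ⟨1, le_rfl, by omega⟩ hfinal' (pow_pos (by linarith) _)
      (pow_le_pow_left₀ (by linarith) (by linarith) _)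
  · exact forall_sub_le_mul_of_le ⟨0, hIic (by omega)⟩ hinit (pow_pos (by linarith) _)
      (pow_le_pow_left₀ (by linarith) (by linarith) _)

/-- Bounding every difference `y i - y j`, rather than the oscillation, keeps the statement
invariant under `y ↦ -y` (with `i` and `j` swapped), which the induction applies to the
initial window. -/
theorem sub_le_pow_mul_divDiffOn {K : Type*} [Field K] [LinearOrder K] [IsStrictOrderedRing K]
    (n : ℕ) {t y : ℕ → K} (ht : StrictMonoOn t (Set.Iic (n + 1)))
    (hy : HasAlternatingIncrements n y) {i j : ℕ} (hi : i ≤ n + 1) (hj : j ≤ n + 1) :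
    y i - y j ≤ (t (n + 1) - t 0) ^ (n + 1) * divDiffOn (range (n + 2)) t y := by
  induction n generalizing t y i j with
  | zero =>
    have hrec := sub_mul_divDiffOn_range 0 ht.injOn y
    have h01 : y 0 ≤ y 1 := by simpa using hy 0 le_rfl
    simp only [zero_add, range_one, divDiffOn_singleton] at hrec
    rw [pow_one, hrec]
    interval_cases i <;> interval_cases j <;> linarith
  | succ n ih =>
    have hrec : (t (n + 2) - t 0) ^ (n + 2) * divDiffOn (range (n + 3)) t y =
        (t (n + 2) - t 0) ^ (n + 1) * divDiffOn (range (n + 2)) (fun i => t (i + 1))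
            (fun i => y (i + 1)) +
          (t (n + 2) - t 0) ^ (n + 1) * -divDiffOn (range (n + 2)) t y := by
      rw [pow_succ, mul_assoc, sub_mul_divDiffOn_range (n + 1) ht.injOn y]
      ring
    rw [hrec]
    refine sub_le_pow_mul_add_of_windows n ht (fun i hi j hj => ?_) (fun i hi j hj => ?_) hi hj
    · exact ih (t := fun i => t (i + 1))
        (ht.comp (fun _ _ _ _ h => Nat.succ_lt_succ h) fun _ h => Nat.succ_le_succ h) hy.tail hi hj
    · have h := ih (ht.mono (Set.Iic_subset_Iic.2 (by omega))) hy.neg_init hj hi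
      rw [divDiffOn_neg] at h
      convert h using 1
      ring

theorem divDiff_eq_divDiffOn (m : ℕ) (t : ℕ → ℝ) (g : ℝ → ℝ) :
    divDiff m t g = divDiffOn (range (m + 1)) t (g ∘ t) :=
  rfl

theorem stmt1_general (m : ℕ) (t : ℕ → ℝ) (g : ℝ → ℝ)
    (ht : ∀ i < m, t i < t (i + 1))
    (hg : ∀ i, 1 ≤ i → i ≤ m → 0 ≤ (-1 : ℝ) ^ (m - i) * (g (t i) - g (t (i - 1)))) :
    (Finset.range (m + 1)).sup' Finset.nonempty_range_add_one (fun i => g (t i)) -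
      (Finset.range (m + 1)).inf' Finset.nonempty_range_add_one (fun i => g (t i)) ≤
    (t m - t 0) ^ m * |divDiff m t g| := by
  rcases m with _ | n
  · simp
  have htmono : StrictMonoOn t (Set.Iic (n + 1)) := strictMonoOn_Iic_of_lt_succ ht
  have hy : HasAlternatingIncrements n (g ∘ t) := fun i hi => by
    simpa using hg (i + 1) (by omega) (by omega)
  obtain ⟨i, hi, hsup⟩ := exists_mem_eq_sup' nonempty_range_add_one fun i => g (t i)
  obtain ⟨j, hj, hinf⟩ := exists_mem_eq_inf' nonempty_range_add_one fun i => g (t i)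
  have ht0 : t 0 < t (n + 1) := htmono (Set.mem_Iic.2 (by omega)) (Set.mem_Iic.2 le_rfl) (by omega)
  calc _ = g (t i) - g (t j) := by rw [hsup, hinf]
    _ ≤ (t (n + 1) - t 0) ^ (n + 1) * divDiff (n + 1) t g := by
      rw [divDiff_eq_divDiffOn]
      exact sub_le_pow_mul_divDiffOn n htmono hy (Nat.lt_succ_iff.1 (mem_range.1 hi))
        (Nat.lt_succ_iff.1 (mem_range.1 hj))
    _ ≤ (t (n + 1) - t 0) ^ (n + 1) * |divDiff (n + 1) t g| :=
      mul_le_mul_of_nonneg_left (le_abs_self _) (pow_pos (sub_pos.2 ht0) _).le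

theorem stmt1 (m : ℕ) (hm : 1 ≤ m) (t : ℕ → ℝ) (g : ℝ → ℝ)
    (ht : ∀ i < m, t i < t (i + 1))
    (hg : ∀ i, 1 ≤ i → i ≤ m → 0 ≤ (-1 : ℝ) ^ (m - i) * (g (t i) - g (t (i - 1)))) :
    (Finset.range (m + 1)).sup' Finset.nonempty_range_add_one (fun i => g (t i)) -
      (Finset.range (m + 1)).inf' Finset.nonempty_range_add_one (fun i => g (t i)) ≤
    (t m - t 0) ^ m * |divDiff m t g| :=
  stmt1_general m t g ht hg
end

section
/- Let a ≥ 0, t_0 < t_m, x_1, ..., x_{m-1} ∈ (t_0, t_m), and let g be a polynomial with g'(x) = a·∏_{i=1}^{m-1}(x - x_i). Then for any points t_0 ≤ s_0 < s_1 < ... < s_m = t_m, one has max_{0≤i≤m} g(s_i) − min_{0≤i≤m} g(s_i) ≤ (a/m)·(t_m − t_0)^m. -/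
/-!
The values of `g` at the sample points differ by at most the total variation
`∫_{t₀}^{t_m} |g'|` of `g` on `[t₀, t_m]`. By AM–GM, `|g'(y)| = a ∏ |y - xᵢ|` is at most
`a/(m-1) · ∑ |y - xᵢ|^(m-1)`, and since every `xᵢ` lies in `[t₀, t_m]`, each
`∫_{t₀}^{t_m} |y - xᵢ|^(m-1) dy` is at most `(t_m - t₀)^m / m`.
-/

open Finset intervalIntegral

theorem Real.prod_le_sum_pow_card_div_card {ι : Type*} (s : Finset ι) (hs : s.Nonempty)
    (f : ι → ℝ) (hf : ∀ i ∈ s, 0 ≤ f i) :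
    ∏ i ∈ s, f i ≤ (∑ i ∈ s, f i ^ #s) / #s := by
  have hcard : (0 : ℝ) < #s := by exact_mod_cast hs.card_pos
  have amgm := Real.geom_mean_le_arith_mean_weighted s (fun _ ↦ (#s : ℝ)⁻¹) (fun i ↦ f i ^ #s)
    (fun _ _ ↦ by positivity) (by simp [hcard.ne']) (fun i hi ↦ pow_nonneg (hf i hi) _)
  calc ∏ i ∈ s, f i = ∏ i ∈ s, (f i ^ #s) ^ (#s : ℝ)⁻¹ := by
        refine prod_congr rfl fun i hi ↦ ?_
        rw [pow_rpow_inv_natCast (hf i hi) (by positivity)]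
    _ ≤ ∑ i ∈ s, (#s : ℝ)⁻¹ * f i ^ #s := amgm
    _ = (∑ i ∈ s, f i ^ #s) / #s := by rw [← mul_sum, inv_mul_eq_div]

theorem integral_abs_sub_pow_le {a b c : ℝ} (hc : c ∈ Set.Icc a b) (k : ℕ) :
    ∫ y in a..b, |y - c| ^ k ≤ (b - a) ^ (k + 1) / (k + 1) := by
  have hint (u v : ℝ) : IntervalIntegrable (fun y ↦ |y - c| ^ k) MeasureTheory.volume u v :=
    (by fun_prop : Continuous fun y : ℝ ↦ |y - c| ^ k).intervalIntegrable u v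
  have left : ∫ y in a..c, |y - c| ^ k = (c - a) ^ (k + 1) / (k + 1) := by
    rw [integral_of_le hc.1, ← Set.uIoc_of_ge hc.1, integral_pow_abs_sub_uIoc,
      abs_of_nonpos (by linarith [hc.1]), neg_sub]
  have right : ∫ y in c..b, |y - c| ^ k = (b - c) ^ (k + 1) / (k + 1) := by
    rw [integral_of_le hc.2, ← Set.uIoc_of_le hc.2, integral_pow_abs_sub_uIoc,
      abs_of_nonneg (by linarith [hc.2])]
  have split : (c - a) ^ (k + 1) + (b - c) ^ (k + 1) ≤ (b - a) ^ (k + 1) := by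
    simpa using pow_add_pow_le (sub_nonneg.2 hc.1) (sub_nonneg.2 hc.2) k.succ_ne_zero
  rw [← integral_add_adjacent_intervals (hint a c) (hint c b), left, right, ← add_div]
  gcongr

theorem integral_prod_abs_sub_le {ι : Type*} (s : Finset ι) {a b : ℝ} (hab : a ≤ b) (x : ι → ℝ)
    (hx : ∀ i ∈ s, x i ∈ Set.Icc a b) :
    ∫ y in a..b, ∏ i ∈ s, |y - x i| ≤ (b - a) ^ (#s + 1) / (#s + 1 : ℕ) := by
  rcases s.eq_empty_or_nonempty with rfl | hs
  · simp
  have hpow (i : ι) : Continuous fun y : ℝ ↦ |y - x i| ^ #s := by fun_prop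
  calc ∫ y in a..b, ∏ i ∈ s, |y - x i|
      ≤ ∫ y in a..b, (∑ i ∈ s, |y - x i| ^ #s) / #s := by
        refine integral_mono_on hab
          ((by fun_prop : Continuous fun y : ℝ ↦ ∏ i ∈ s, |y - x i|).intervalIntegrable a b)
          ((by fun_prop : Continuous fun y : ℝ ↦ (∑ i ∈ s, |y - x i| ^ #s) / #s).intervalIntegrable
            a b) fun y _ ↦ ?_
        exact Real.prod_le_sum_pow_card_div_card s hs _ fun i _ ↦ abs_nonneg _
    _ = (∑ i ∈ s, ∫ y in a..b, |y - x i| ^ #s) / #s := by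
        rw [integral_div, integral_finsetSum fun i _ ↦ (hpow i).intervalIntegrable a b]
    _ ≤ (∑ _i ∈ s, (b - a) ^ (#s + 1) / (#s + 1)) / #s := by
        gcongr with i hi
        exact integral_abs_sub_pow_le (hx i hi) _
    _ = (b - a) ^ (#s + 1) / (#s + 1 : ℕ) := by
        rw [sum_const, nsmul_eq_mul]
        field_simp
        push_cast
        ring

theorem Polynomial.abs_eval_sub_le_integral_abs_derivative (p : Polynomial ℝ) {a b u v : ℝ}
    (hu : u ∈ Set.Icc a b) (hv : v ∈ Set.Icc a b) :
    |p.eval u - p.eval v| ≤ ∫ y in a..b, |p.derivative.eval y| := by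
  wlog huv : v ≤ u generalizing u v
  · rw [abs_sub_comm]
    exact this hv hu (le_of_not_ge huv)
  rw [← integral_eq_sub_of_hasDerivAt (fun y _ ↦ p.hasDerivAt y)
    (p.derivative.continuous.intervalIntegrable v u)]
  exact (abs_integral_le_integral_abs huv).trans <| integral_mono_interval hv.1 huv hu.2
    (.of_forall fun _ ↦ abs_nonneg _) (p.derivative.continuous.abs.intervalIntegrable a b)

theorem Finset.sup'_sub_inf'_le {ι α : Type*} [AddCommGroup α] [LinearOrder α]
    [IsOrderedAddMonoid α] (s : Finset ι) (hs : s.Nonempty) (f : ι → α) {C : α}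
    (h : ∀ i ∈ s, ∀ j ∈ s, f i - f j ≤ C) : s.sup' hs f - s.inf' hs f ≤ C := by
  obtain ⟨i, hi, hsup⟩ := s.exists_mem_eq_sup' hs f
  obtain ⟨j, hj, hinf⟩ := s.exists_mem_eq_inf' hs f
  rw [hsup, hinf]
  exact h i hi j hj

theorem monotoneOn_Iic_of_le_succ {α : Type*} [Preorder α] {f : ℕ → α} {m : ℕ}
    (hf : ∀ n < m, f n ≤ f (n + 1)) : MonotoneOn f (Set.Iic m) := by
  intro i _ j hj hij
  induction j, hij using Nat.le_induction with
  | base => rfl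
  | succ n _ ih => exact (ih (Nat.le_of_succ_le hj)).trans (hf n hj)

theorem stmt6 (m : ℕ) (hm : 1 ≤ m) (a t0 tm : ℝ) (ha : 0 ≤ a) (htt : t0 < tm)
    (x : ℕ → ℝ) (hx : ∀ i, 1 ≤ i → i ≤ m - 1 → x i ∈ Set.Ioo t0 tm)
    (g : Polynomial ℝ)
    (hg : ∀ y : ℝ, (Polynomial.derivative g).eval y =
      a * ∏ i ∈ Finset.Icc 1 (m - 1), (y - x i))
    (s : ℕ → ℝ) (hs0 : t0 ≤ s 0) (hsm : s m = tm)
    (hsmono : ∀ i < m, s i < s (i + 1)) :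
    (Finset.range (m + 1)).sup' Finset.nonempty_range_add_one (fun i => g.eval (s i)) -
      (Finset.range (m + 1)).inf' Finset.nonempty_range_add_one (fun i => g.eval (s i)) ≤
    (a / m) * (tm - t0) ^ m := by
  have hs_mono := monotoneOn_Iic_of_le_succ fun i hi ↦ (hsmono i hi).le
  have hs_mem (i : ℕ) (hi : i ∈ range (m + 1)) : s i ∈ Set.Icc t0 tm := by
    have hi : i ∈ Set.Iic m := Nat.lt_succ_iff.1 (mem_range.1 hi)
    exact ⟨hs0.trans (hs_mono (Nat.zero_le m) hi (Nat.zero_le i)),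
      hsm ▸ hs_mono hi Set.self_mem_Iic hi⟩
  have hderiv (y : ℝ) : |g.derivative.eval y| = a * ∏ i ∈ Icc 1 (m - 1), |y - x i| := by
    rw [hg, abs_mul, abs_prod, abs_of_nonneg ha]
  have hvar : ∫ y in t0..tm, |g.derivative.eval y| ≤ a * ((tm - t0) ^ m / m) := by
    have := integral_prod_abs_sub_le (Icc 1 (m - 1)) htt.le x fun i hi ↦
      Set.Ioo_subset_Icc_self (hx i (mem_Icc.1 hi).1 (mem_Icc.1 hi).2)
    rw [Nat.card_Icc, Nat.add_sub_cancel, Nat.sub_add_cancel hm] at this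
    simp_rw [hderiv, integral_const_mul]
    gcongr
  refine Finset.sup'_sub_inf'_le _ _ _ fun i hi j hj ↦ ?_
  calc g.eval (s i) - g.eval (s j) ≤ |g.eval (s i) - g.eval (s j)| := le_abs_self _
    _ ≤ ∫ y in t0..tm, |g.derivative.eval y| :=
      g.abs_eval_sub_le_integral_abs_derivative (hs_mem i hi) (hs_mem j hj)
    _ ≤ a / m * (tm - t0) ^ m := by rwa [div_mul_eq_mul_div, mul_div_assoc]
end
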